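/- Let 0 < C < 1. Then ∫_{−∞}^{−1/C} ∫_{−∞}^{0} (x² + y² − 1)^{−3/2} dy dx = artanh C. (This is the Study–de Sitter area of the quadrant Z̃^C = {(x,y) : x ≤ −1/C, y ≤ 0}, which lies outside the unit circle.) -/

import Mathlib

open MeasureTheory

noncomputable def artanh (x : ℝ) : ℝ := Real.log ((1 + x) / (1 - x)) / 2

/-! Both integrals are computed by explicit antiderivatives on half-lines, after reflecting the
even integrands: for `b > 0`, `y / (b √(b + y²))` is an antiderivative of `(b + y²)^(-3/2)` tending
to `1 / b`, so the inner integral is `(x² - 1)⁻¹`; and `-artanh (1 / x)` is an antiderivative of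
`(x² - 1)⁻¹` on `(1, ∞)` tending to `0`, so the outer integral over `x ≥ 1 / C` is `artanh C`. -/

open Set Filter Topology

theorem integral_Iic_neg_comp_sq {E : Type*} [NormedAddCommGroup E] [NormedSpace ℝ E]
    (f : ℝ → E) (c : ℝ) : ∫ x in Iic (-c), f (x ^ 2) = ∫ x in Ioi c, f (x ^ 2) := by
  rw [← integral_comp_neg_Ioi c fun x => f (x ^ 2)]
  simp only [neg_sq]

theorem hasDerivAt_artanh {x : ℝ} (hx : x ^ 2 ≠ 1) : HasDerivAt artanh (1 - x ^ 2)⁻¹ x := by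
  have hm : 1 - x ≠ 0 := fun h => hx (by nlinarith)
  have hp : 1 + x ≠ 0 := fun h => hx (by nlinarith)
  have hq : HasDerivAt (fun x => (1 + x) / (1 - x)) (2 / (1 - x) ^ 2) x := by
    refine (((hasDerivAt_id x).const_add 1).div ((hasDerivAt_id x).const_sub 1) hm).congr_deriv ?_
    simp only [id]
    ring
  refine ((hq.log (div_ne_zero hp hm)).div_const 2).congr_deriv ?_
  field_simp
  ring

theorem integral_Ioi_inv_sq_sub_one {a : ℝ} (ha : 1 < a) :
    ∫ x in Ioi a, (x ^ 2 - 1)⁻¹ = artanh a⁻¹ := by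
  have hderiv : ∀ x ∈ Ici a, HasDerivAt (fun x => -artanh x⁻¹) (x ^ 2 - 1)⁻¹ x := by
    intro x hx
    have hx1 : 1 < x := ha.trans_le hx
    have hsq : (x⁻¹) ^ 2 ≠ 1 := by
      rw [inv_pow]
      exact (inv_lt_one_of_one_lt₀ (one_lt_pow₀ hx1 two_ne_zero)).ne
    refine ((hasDerivAt_artanh hsq).comp x (hasDerivAt_inv (by positivity))).neg.congr_deriv ?_
    field_simp
  have hnonneg : ∀ x ∈ Ioi a, 0 ≤ (x ^ 2 - 1)⁻¹ := fun x hx => by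
    have : 1 < x := ha.trans hx
    exact inv_nonneg.2 (by nlinarith)
  have hlim : Tendsto (fun x : ℝ => -artanh x⁻¹) atTop (𝓝 0) := by
    have h := ((hasDerivAt_artanh (by norm_num)).continuousAt.tendsto.comp
      tendsto_inv_atTop_zero).neg
    simpa [artanh] using h
  rw [integral_Ioi_of_hasDerivAt_of_nonneg' hderiv hnonneg hlim]
  ring

theorem rpow_neg_three_halves {x : ℝ} (hx : 0 ≤ x) : x ^ (-(3 : ℝ) / 2) = (x * √x)⁻¹ := by
  rw [neg_div, Real.rpow_neg hx, show (3 : ℝ) / 2 = 1 + 1 / 2 by norm_num,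
    Real.rpow_add' hx (by norm_num), Real.rpow_one, Real.sqrt_eq_rpow]

theorem hasDerivAt_div_mul_sqrt_add_sq {b : ℝ} (hb : 0 < b) (y : ℝ) :
    HasDerivAt (fun y => y / (b * √(b + y ^ 2))) ((b + y ^ 2) ^ (-(3 : ℝ) / 2)) y := by
  have hpos : 0 < b + y ^ 2 := by positivity
  have hs : HasDerivAt (fun y => √(b + y ^ 2)) (y / √(b + y ^ 2)) y := by
    refine (((hasDerivAt_pow 2 y).const_add b).sqrt hpos.ne').congr_deriv ?_
    ring
  have hsqrt := Real.sqrt_pos.2 hpos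
  refine ((hasDerivAt_id y).div (hs.const_mul b) (by positivity)).congr_deriv ?_
  rw [rpow_neg_three_halves hpos.le, id]
  field_simp
  rw [Real.sq_sqrt hpos.le]
  ring

theorem tendsto_div_mul_sqrt_add_sq {b : ℝ} (hb : 0 < b) :
    Tendsto (fun y => y / (b * √(b + y ^ 2))) atTop (𝓝 b⁻¹) := by
  have hsqrt : Tendsto (fun y : ℝ => b * √(b / y ^ 2 + 1)) atTop (𝓝 b) := by
    have h := (tendsto_pow_atTop two_ne_zero).const_div_atTop b |>.add_const 1
      |>.sqrt |>.const_mul b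
    simpa using h
  refine (hsqrt.inv₀ hb.ne').congr' ?_
  filter_upwards [eventually_gt_atTop 0] with y hy
  have : √(b + y ^ 2) = y * √(b / y ^ 2 + 1) := by
    rw [← Real.sqrt_sq hy.le, ← Real.sqrt_mul (sq_nonneg y)]
    congr 1
    field_simp
    exact Real.sq_sqrt (sq_nonneg y)
  rw [this]
  field_simp

theorem integral_Iic_zero_add_sq_rpow {b : ℝ} (hb : 0 < b) :
    ∫ y in Iic (0 : ℝ), (b + y ^ 2) ^ (-(3 : ℝ) / 2) = b⁻¹ := by
  rw [← neg_zero, integral_Iic_neg_comp_sq (fun t => (b + t) ^ (-(3 : ℝ) / 2)),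
    integral_Ioi_of_hasDerivAt_of_nonneg' (fun y _ => hasDerivAt_div_mul_sqrt_add_sq hb y)
      (fun y _ => Real.rpow_nonneg (by positivity) _) (tendsto_div_mul_sqrt_add_sq hb)]
  simp

theorem sds_area_quadrant (C : ℝ) (hC0 : 0 < C) (hC1 : C < 1) :
    (∫ x in Set.Iic (-(1 / C)), ∫ y in Set.Iic (0:ℝ),
        (x ^ 2 + y ^ 2 - 1) ^ (-(3:ℝ)/2)) = artanh C := by
  have hCinv : 1 < 1 / C := by rwa [lt_div_iff₀ hC0, one_mul]
  have hinner : ∀ x ∈ Iic (-(1 / C)),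
      ∫ y in Iic (0 : ℝ), (x ^ 2 + y ^ 2 - 1) ^ (-(3 : ℝ) / 2) = (x ^ 2 - 1)⁻¹ := by
    intro x hx
    have hb : 0 < x ^ 2 - 1 := by nlinarith [mem_Iic.1 hx]
    simp_rw [add_sub_right_comm (x ^ 2)]
    exact integral_Iic_zero_add_sq_rpow hb
  rw [setIntegral_congr_fun measurableSet_Iic hinner,
    integral_Iic_neg_comp_sq (fun t => (t - 1)⁻¹), integral_Ioi_inv_sq_sub_one hCinv,
    one_div, inv_inv]
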